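/- arXiv:1903.08497 — 7 statements merged into one kernel-verified Lean document; each statement's English description precedes it below -/
import Mathlib

section
/- Suppose F = f + Ψ where f : ℝⁿ → ℝ is L-smooth (L > 0) and Ψ : ℝⁿ → ℝ ∪ {+∞} is proper, closed and convex. Fix x ∈ ℝⁿ and let x̄ = prox_{Ψ/L}(x − ∇f(x)/L). Then (i) there exists a subgradient v ∈ ∂Ψ(x̄) with ‖∇f(x̄) + v‖ ≤ 2‖G_{1/L}(x)‖; and (ii) for every t > 0, G_t(x) = 0 if and only if −∇f(x) ∈ ∂Ψ(x). -/
/-!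
Two facts about a proximal point `p = prox_{tΨ} u` drive the argument: its optimality condition
`(u - p) / t ∈ ∂Ψ(p)`, and its uniqueness, since monotonicity of `∂Ψ` rules out any other
point `x` with `(u - x) / t ∈ ∂Ψ(x)`. For `x̄` the first gives the subgradient
`v = G_{1/L}(x) - ∇f(x)`, so `∇f(x̄) + v = (∇f(x̄) - ∇f(x)) + G_{1/L}(x)`, and the `L`-Lipschitz
continuity of `∇f` bounds it by `2‖G_{1/L}(x)‖`. The second gives `G_t(x) = 0`, i.e.
`prox_{tΨ}(x - t∇f(x)) = x`, exactly when `-∇f(x) ∈ ∂Ψ(x)`.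
-/

open scoped RealInnerProductSpace
open Set Filter Topology

lemma le_of_forall_le_add_mul {a b c : ℝ} (h : ∀ s ∈ Ioc (0 : ℝ) 1, a ≤ b + s * c) : a ≤ b := by
  have hlim : Tendsto (fun s : ℝ => b + s * c) (𝓝[>] 0) (𝓝 b) := by
    have : Continuous fun s : ℝ => b + s * c := by fun_prop
    simpa using (this.tendsto 0).mono_left nhdsWithin_le_nhds
  exact ge_of_tendsto hlim (Filter.mem_of_superset (Ioc_mem_nhdsGT one_pos) h)

lemma EReal.ne_top_of_add_coe_le {a b : EReal} {r : ℝ} (h : a + r ≤ b) (hb : b ≠ ⊤) : a ≠ ⊤ := by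
  rintro rfl
  exact hb (top_le_iff.1 (by simpa using h))

section Prox

variable {H : Type*} [NormedAddCommGroup H] {Ψ : H → EReal}

def IsProxPoint (Ψ : H → EReal) (t : ℝ) (u p : H) : Prop :=
  ∀ z, Ψ p + ((‖u - p‖ ^ 2 / (2 * t) : ℝ) : EReal) ≤ Ψ z + ((‖u - z‖ ^ 2 / (2 * t) : ℝ) : EReal)

lemma IsProxPoint.ne_top {t : ℝ} {u p : H} (hp : IsProxPoint Ψ t u p) (hfin : ∃ z, Ψ z ≠ ⊤) :
    Ψ p ≠ ⊤ :=
  let ⟨z, hz⟩ := hfin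
  EReal.ne_top_of_add_coe_le (hp z) (EReal.add_lt_top hz (EReal.coe_ne_top _)).ne

variable [InnerProductSpace ℝ H]

def IsSubgradient (Ψ : H → EReal) (x v : H) : Prop :=
  ∀ y, Ψ x + ((⟪v, y - x⟫ : ℝ) : EReal) ≤ Ψ y

lemma IsSubgradient.ne_top {x v : H} (hv : IsSubgradient Ψ x v) (hfin : ∃ z, Ψ z ≠ ⊤) :
    Ψ x ≠ ⊤ :=
  let ⟨z, hz⟩ := hfin
  EReal.ne_top_of_add_coe_le (hv z) hz

lemma IsSubgradient.inner_sub_nonpos (hbot : ∀ x, Ψ x ≠ ⊥) (hfin : ∃ z, Ψ z ≠ ⊤) {x y v w : H}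
    (hv : IsSubgradient Ψ x v) (hw : IsSubgradient Ψ y w) : ⟪v - w, y - x⟫ ≤ 0 := by
  have hxy := hv y
  have hyx := hw x
  rw [← EReal.coe_toReal (hv.ne_top hfin) (hbot x), ← EReal.coe_toReal (hw.ne_top hfin) (hbot y),
    ← EReal.coe_add, EReal.coe_le_coe_iff] at hxy hyx
  rw [← neg_sub y x, inner_neg_right] at hyx
  rw [inner_sub_left]
  linarith

/-- First-order optimality of the proximal point: compare it with the points of the segment
towards `y` and let the step go to `0`. -/
lemma IsProxPoint.isSubgradient (hbot : ∀ x, Ψ x ≠ ⊥) (hfin : ∃ z, Ψ z ≠ ⊤)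
    (hconvex : ∀ x y : H, ∀ a b : ℝ, 0 ≤ a → 0 ≤ b → a + b = 1 →
      Ψ (a • x + b • y) ≤ (a : EReal) * Ψ x + (b : EReal) * Ψ y)
    {t : ℝ} (ht : 0 < t) {u p : H} (hp : IsProxPoint Ψ t u p) :
    IsSubgradient Ψ p (t⁻¹ • (u - p)) := by
  intro y
  obtain hy | hy := eq_or_ne (Ψ y) ⊤
  · simp [hy]
  rw [← EReal.coe_toReal (hp.ne_top hfin) (hbot p), ← EReal.coe_toReal hy (hbot y),
    ← EReal.coe_add, EReal.coe_le_coe_iff, real_inner_smul_left]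
  set r := (Ψ p).toReal
  set q := (Ψ y).toReal
  refine le_of_forall_le_add_mul (c := ‖y - p‖ ^ 2 / (2 * t)) fun s ⟨hs, hs1⟩ => ?_
  have hmin : r + ‖u - p‖ ^ 2 / (2 * t)
      ≤ (1 - s) * r + s * q + ‖u - ((1 - s) • p + s • y)‖ ^ 2 / (2 * t) := by
    have hcomb := hconvex p y (1 - s) s (by linarith) hs.le (by ring)
    rw [← EReal.coe_toReal (hp.ne_top hfin) (hbot p), ← EReal.coe_toReal hy (hbot y),
      ← EReal.coe_mul, ← EReal.coe_mul, ← EReal.coe_add] at hcomb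
    have := (hp _).trans (add_le_add_left hcomb _)
    rwa [← EReal.coe_toReal (hp.ne_top hfin) (hbot p), ← EReal.coe_add, ← EReal.coe_add,
      EReal.coe_le_coe_iff] at this
  have hnorm : ‖u - ((1 - s) • p + s • y)‖ ^ 2
      = ‖u - p‖ ^ 2 - 2 * s * ⟪u - p, y - p⟫ + s ^ 2 * ‖y - p‖ ^ 2 := by
    have : u - ((1 - s) • p + s • y) = (u - p) - s • (y - p) := by
      rw [sub_smul, one_smul, smul_sub]; abel
    rw [this, norm_sub_sq_real, real_inner_smul_right, norm_smul, Real.norm_eq_abs, mul_pow,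
      sq_abs]
    ring
  rw [hnorm] at hmin
  refine le_of_mul_le_mul_left ?_ hs
  have : s * (q + s * (‖y - p‖ ^ 2 / (2 * t))) - s * (r + t⁻¹ * ⟪u - p, y - p⟫)
      = (1 - s) * r + s * q + (‖u - p‖ ^ 2 - 2 * s * ⟪u - p, y - p⟫ + s ^ 2 * ‖y - p‖ ^ 2) / (2 * t)
        - (r + ‖u - p‖ ^ 2 / (2 * t)) := by
    field_simp; ring
  linarith

lemma IsProxPoint.eq_iff_isSubgradient (hbot : ∀ x, Ψ x ≠ ⊥) (hfin : ∃ z, Ψ z ≠ ⊤)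
    (hconvex : ∀ x y : H, ∀ a b : ℝ, 0 ≤ a → 0 ≤ b → a + b = 1 →
      Ψ (a • x + b • y) ≤ (a : EReal) * Ψ x + (b : EReal) * Ψ y)
    {t : ℝ} (ht : 0 < t) {u p x : H} (hp : IsProxPoint Ψ t u p) :
    p = x ↔ IsSubgradient Ψ x (t⁻¹ • (u - x)) := by
  refine ⟨fun h => h ▸ hp.isSubgradient hbot hfin hconvex ht, fun hx => ?_⟩
  have hmono := (hp.isSubgradient hbot hfin hconvex ht).inner_sub_nonpos hbot hfin hx
  rw [← smul_sub, sub_sub_sub_cancel_left, real_inner_smul_left, real_inner_self_eq_norm_sq] at hmono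
  have hxp := (sq_nonpos_iff _).1 (nonpos_of_mul_nonpos_right hmono (inv_pos.2 ht))
  rw [norm_eq_zero, sub_eq_zero] at hxp
  exact hxp.symm

end Prox

section Smooth

variable {H : Type*} [NormedAddCommGroup H] [InnerProductSpace ℝ H]

/-- Evaluate both bounds at `p - M⁻¹ • (g' p - g' q)`, then symmetrize in `p` and `q`. -/
lemma norm_sub_sq_le_mul_inner_of_sandwich {g : H → ℝ} {g' : H → H} {M : ℝ} (hM : 0 < M)
    (hlow : ∀ u v, g v + ⟪g' v, u - v⟫ ≤ g u)
    (hup : ∀ u v, g u ≤ g v + ⟪g' v, u - v⟫ + M / 2 * ‖u - v‖ ^ 2) (p q : H) :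
    ‖g' p - g' q‖ ^ 2 ≤ M * ⟪g' p - g' q, p - q⟫ := by
  have gap : ∀ p q, g q + ⟪g' q, p - q⟫ + ‖g' p - g' q‖ ^ 2 / (2 * M) ≤ g p := by
    intro p q
    set a := g' p - g' q
    have h₁ := hlow (p - M⁻¹ • a) q
    have h₂ := hup (p - M⁻¹ • a) p
    have e₁ : p - M⁻¹ • a - q = (p - q) - M⁻¹ • a := sub_right_comm _ _ _
    have e₂ : p - M⁻¹ • a - p = -(M⁻¹ • a) := by abel
    rw [e₁, inner_sub_right, real_inner_smul_right] at h₁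
    rw [e₂, inner_neg_right, real_inner_smul_right, norm_neg, norm_smul, Real.norm_eq_abs,
      abs_of_pos (inv_pos.2 hM)] at h₂
    have ha : M⁻¹ * ⟪g' p, a⟫ - M⁻¹ * ⟪g' q, a⟫ = M⁻¹ * ‖a‖ ^ 2 := by
      rw [← mul_sub, ← inner_sub_left, real_inner_self_eq_norm_sq]
    have e₃ : M / 2 * (M⁻¹ * ‖a‖) ^ 2 = M⁻¹ * ‖a‖ ^ 2 - ‖a‖ ^ 2 / (2 * M) := by
      field_simp; ring
    linarith
  have h₁ := gap p q
  have h₂ := gap q p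
  rw [norm_sub_rev, ← neg_sub p q, inner_neg_right] at h₂
  have hsplit : ⟪g' p - g' q, p - q⟫ = ⟪g' p, p - q⟫ - ⟪g' q, p - q⟫ := inner_sub_left _ _ _
  have hM' : ‖g' p - g' q‖ ^ 2 / M ≤ ⟪g' p - g' q, p - q⟫ := by
    have hhalf : ‖g' p - g' q‖ ^ 2 / M = 2 * (‖g' p - g' q‖ ^ 2 / (2 * M)) := by field_simp
    linarith
  rwa [div_le_iff₀' hM] at hM'

/-- The two-sided Taylor bound makes `f + (L/2)‖·‖²` convex with `(2L)`-smooth slope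
`f' + L • id`, and co-coercivity of that slope yields `L`-Lipschitz continuity of `f'`. -/
lemma norm_sub_le_of_abs_sub_inner_le {f : H → ℝ} {f' : H → H} {L : ℝ} (hL : 0 < L)
    (hsmooth : ∀ x y, |f x - f y - ⟪f' y, x - y⟫| ≤ L / 2 * ‖x - y‖ ^ 2) (p q : H) :
    ‖f' p - f' q‖ ≤ L * ‖p - q‖ := by
  have expand : ∀ u v : H, L / 2 * ‖u‖ ^ 2 = L / 2 * ‖v‖ ^ 2 + L * ⟪v, u - v⟫
      + L / 2 * ‖u - v‖ ^ 2 := by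
    intro u v
    rw [norm_sub_sq_real, inner_sub_right, real_inner_self_eq_norm_sq, real_inner_comm]
    ring
  have slope : ∀ u v : H, ⟪f' v + L • v, u - v⟫ = ⟪f' v, u - v⟫ + L * ⟪v, u - v⟫ := by
    intro u v
    rw [inner_add_left, real_inner_smul_left]
  have cocoercive := norm_sub_sq_le_mul_inner_of_sandwich (g := fun u => f u + L / 2 * ‖u‖ ^ 2)
    (g' := fun u => f' u + L • u) (M := 2 * L) (by positivity)
    (fun u v => by
      have := (abs_le.1 (hsmooth u v)).1
      simp only [slope, expand u v]
      linarith)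
    (fun u v => by
      have := (abs_le.1 (hsmooth u v)).2
      simp only [slope, expand u v]
      linarith) p q
  have hslope_sub : f' p + L • p - (f' q + L • q) = (f' p - f' q) + L • (p - q) := by
    rw [smul_sub]; abel
  rw [hslope_sub, norm_add_sq_real, inner_add_left, real_inner_smul_left, real_inner_smul_right,
    real_inner_self_eq_norm_sq, norm_smul, Real.norm_eq_abs, abs_of_pos hL] at cocoercive
  have hsq : ‖f' p - f' q‖ ^ 2 ≤ (L * ‖p - q‖) ^ 2 := by nlinarith
  exact le_of_pow_le_pow_left₀ two_ne_zero (by positivity) hsq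

theorem prox_gradient_near_stationarity_general {n : ℕ} (L : ℝ) (hL : 0 < L)
    (f : EuclideanSpace ℝ (Fin n) → ℝ)
    (f' : EuclideanSpace ℝ (Fin n) → EuclideanSpace ℝ (Fin n))
    (hsmooth : ∀ x y : EuclideanSpace ℝ (Fin n),
      |f x - f y - ⟪f' y, x - y⟫| ≤ L / 2 * ‖x - y‖ ^ 2)
    (Ψ : EuclideanSpace ℝ (Fin n) → EReal)
    (hproper : (∀ x, Ψ x ≠ ⊥) ∧ (∃ x, Ψ x ≠ ⊤))
    (hconvex : ∀ x y : EuclideanSpace ℝ (Fin n), ∀ a b : ℝ, 0 ≤ a → 0 ≤ b → a + b = 1 →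
      Ψ (a • x + b • y) ≤ (a : EReal) * Ψ x + (b : EReal) * Ψ y)
    (prox : ℝ → EuclideanSpace ℝ (Fin n) → EuclideanSpace ℝ (Fin n))
    (hprox : ∀ t : ℝ, 0 < t → ∀ x z : EuclideanSpace ℝ (Fin n),
      Ψ (prox t x) + ((‖x - prox t x‖ ^ 2 / (2 * t) : ℝ) : EReal)
        ≤ Ψ z + ((‖x - z‖ ^ 2 / (2 * t) : ℝ) : EReal))
    (G : ℝ → EuclideanSpace ℝ (Fin n) → EuclideanSpace ℝ (Fin n))
    (hG : ∀ t x, G t x = t⁻¹ • (x - prox t (x - t • f' x)))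
    (x xbar : EuclideanSpace ℝ (Fin n))
    (hxbar : xbar = prox (1 / L) (x - (1 / L) • f' x)) :
    (∃ v : EuclideanSpace ℝ (Fin n),
      (∀ y, Ψ xbar + ((⟪v, y - xbar⟫ : ℝ) : EReal) ≤ Ψ y) ∧
      ‖f' xbar + v‖ ≤ 2 * ‖G (1 / L) x‖) ∧
    (∀ t : ℝ, 0 < t →
      (G t x = 0 ↔ ∀ y, Ψ x + ((⟪-f' x, y - x⟫ : ℝ) : EReal) ≤ Ψ y)) := by
  obtain ⟨hbot, hfin⟩ := hproper
  have hprox : ∀ t, 0 < t → ∀ u, IsProxPoint Ψ t u (prox t u) := hprox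
  refine ⟨?_, fun t ht => ?_⟩
  · have hGx : G (1 / L) x = L • (x - xbar) := by rw [hG, ← hxbar, one_div, inv_inv]
    have hsub := (hprox (1 / L) (by positivity) (x - (1 / L) • f' x)).isSubgradient hbot hfin
      hconvex (by positivity)
    rw [← hxbar, one_div, inv_inv, sub_right_comm, smul_sub, smul_smul, mul_inv_cancel₀ hL.ne',
      one_smul] at hsub
    refine ⟨_, hsub, ?_⟩
    calc ‖f' xbar + (L • (x - xbar) - f' x)‖ = ‖(f' xbar - f' x) + L • (x - xbar)‖ := by
          congr 1; abel
      _ ≤ L * ‖xbar - x‖ + L * ‖x - xbar‖ := by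
          refine norm_add_le_of_le (norm_sub_le_of_abs_sub_inner_le hL hsmooth _ _) ?_
          rw [norm_smul, Real.norm_eq_abs, abs_of_pos hL]
      _ = 2 * ‖G (1 / L) x‖ := by
          rw [hGx, norm_smul, Real.norm_eq_abs, abs_of_pos hL, norm_sub_rev]; ring
  · have hgrad : t⁻¹ • (x - t • f' x - x) = -f' x := by
      rw [sub_sub_cancel_left, smul_neg, smul_smul, inv_mul_cancel₀ ht.ne', one_smul]
    rw [hG, smul_eq_zero_iff_right (inv_ne_zero ht.ne'), sub_eq_zero, eq_comm,
      (hprox t ht _).eq_iff_isSubgradient hbot hfin hconvex ht, hgrad]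
    exact Iff.rfl

/-- near-stationarity measured by the prox-gradient, and
vanishing of the prox-gradient iff first-order optimality. -/
theorem prox_gradient_near_stationarity {n : ℕ} (L : ℝ) (hL : 0 < L)
    (f : EuclideanSpace ℝ (Fin n) → ℝ)
    (f' : EuclideanSpace ℝ (Fin n) → EuclideanSpace ℝ (Fin n))
    (hdiff : ∀ x, HasGradientAt f (f' x) x)
    (hsmooth : ∀ x y : EuclideanSpace ℝ (Fin n),
      |f x - f y - ⟪f' y, x - y⟫| ≤ L / 2 * ‖x - y‖ ^ 2)
    (Ψ : EuclideanSpace ℝ (Fin n) → EReal)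
    (hproper : (∀ x, Ψ x ≠ ⊥) ∧ (∃ x, Ψ x ≠ ⊤))
    (hclosed : LowerSemicontinuous Ψ)
    (hconvex : ∀ x y : EuclideanSpace ℝ (Fin n), ∀ a b : ℝ, 0 ≤ a → 0 ≤ b → a + b = 1 →
      Ψ (a • x + b • y) ≤ (a : EReal) * Ψ x + (b : EReal) * Ψ y)
    (prox : ℝ → EuclideanSpace ℝ (Fin n) → EuclideanSpace ℝ (Fin n))
    (hprox : ∀ t : ℝ, 0 < t → ∀ x z : EuclideanSpace ℝ (Fin n),
      Ψ (prox t x) + ((‖x - prox t x‖ ^ 2 / (2 * t) : ℝ) : EReal)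
        ≤ Ψ z + ((‖x - z‖ ^ 2 / (2 * t) : ℝ) : EReal))
    (G : ℝ → EuclideanSpace ℝ (Fin n) → EuclideanSpace ℝ (Fin n))
    (hG : ∀ t x, G t x = t⁻¹ • (x - prox t (x - t • f' x)))
    (x xbar : EuclideanSpace ℝ (Fin n))
    (hxbar : xbar = prox (1 / L) (x - (1 / L) • f' x)) :
    (∃ v : EuclideanSpace ℝ (Fin n),
      (∀ y, Ψ xbar + ((⟪v, y - xbar⟫ : ℝ) : EReal) ≤ Ψ y) ∧
      ‖f' xbar + v‖ ≤ 2 * ‖G (1 / L) x‖) ∧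
    (∀ t : ℝ, 0 < t →
      (G t x = 0 ↔ ∀ y, Ψ x + ((⟪-f' x, y - x⟫ : ℝ) : EReal) ≤ Ψ y)) :=
  prox_gradient_near_stationarity_general L hL f f' hsmooth Ψ hproper hconvex prox hprox G hG x xbar
    hxbar
end Smooth
end

section
/- Suppose F = f + Ψ where f : ℝⁿ → ℝ is α-strongly convex (α > 0) and L-smooth (L > 0) and Ψ : ℝⁿ → ℝ ∪ {+∞} is proper, closed and convex. Then for all x, y ∈ ℝⁿ, F(y) ≥ F(x̄) + ⟨G_{1/L}(x), y − x⟩ + (1/(2L))‖G_{1/L}(x)‖² + (α/2)‖y − x‖², where x̄ = x − G_{1/L}(x)/L. -/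
/-!
Let `p = x̄`, so that `p = prox_{Ψ/L}(x - ∇f(x)/L)` and `x - p = G/L` with `G = G_{1/L}(x)`.
Comparing `p` with the points of the segment `[p, y]` in the minimisation defining the prox and
letting them tend to `p` shows that `G - ∇f(x)` is a subgradient of `Ψ` at `p`. Adding this
subgradient inequality, the descent inequality `f(p) ≤ f(x) + ⟪∇f(x), p - x⟫ + (L/2)‖p - x‖²`
and strong convexity of `f` at `x`, the `∇f(x)` terms cancel and what is left is the bound.
The infinite values of `Ψ` make both sides infinite or contradict the minimality of `p`.
-/

open scoped RealInnerProductSpace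
open Filter Topology Set

theorem le_of_forall_sub_mul_le {a b d : ℝ} (h : ∀ t ∈ Ioc (0 : ℝ) 1, a - t * d ≤ b) :
    a ≤ b := by
  have hlim : Tendsto (fun t : ℝ => a - t * d) (𝓝[>] 0) (𝓝 a) := by
    have : Continuous fun t : ℝ => a - t * d := by fun_prop
    simpa using (this.tendsto 0).mono_left nhdsWithin_le_nhds
  refine le_of_tendsto hlim ?_
  filter_upwards [Ioc_mem_nhdsGT (zero_lt_one' ℝ)] using h

theorem EReal.coe_add_add_coe_le_of_forall_coe {A B : EReal} {a₀ b₀ c r s : ℝ}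
    (hAB : A + r ≤ B + s) (h : ∀ a b : ℝ, A = a → B = b → a₀ + a + c ≤ b₀ + b) :
    (a₀ : EReal) + A + c ≤ b₀ + B := by
  induction A using EReal.rec with
  | bot => simp
  | coe a =>
    induction B using EReal.rec with
    | bot => simp at hAB
    | coe b => exact_mod_cast h a b rfl rfl
    | top => simp
  | top =>
    induction B using EReal.rec with
    | bot => simp at hAB
    | coe b => exact absurd hAB (by simp [← EReal.coe_add])
    | top => simp

section Prox

variable {E : Type*} [NormedAddCommGroup E] [InnerProductSpace ℝ E]

theorem subgradient_ineq_of_prox_min {Ψ : E → EReal}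
    (hconvex : ∀ x y : E, ∀ a b : ℝ, 0 ≤ a → 0 ≤ b → a + b = 1 →
      Ψ (a • x + b • y) ≤ (a : EReal) * Ψ x + (b : EReal) * Ψ y)
    {τ : ℝ} (hτ : 0 < τ) {u p y : E} {ψp ψy : ℝ} (hp : Ψ p = ψp) (hy : Ψ y = ψy)
    (hmin : ∀ z, Ψ p + ((‖u - p‖ ^ 2 / (2 * τ) : ℝ) : EReal)
      ≤ Ψ z + ((‖u - z‖ ^ 2 / (2 * τ) : ℝ) : EReal)) :
    ψp + ⟪u - p, y - p⟫ / τ ≤ ψy := by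
  refine le_of_forall_sub_mul_le (d := ‖y - p‖ ^ 2 / (2 * τ)) fun t ⟨ht, ht1⟩ => ?_
  have hconv : Ψ ((1 - t) • p + t • y) ≤ (((1 - t) * ψp + t * ψy : ℝ) : EReal) := by
    simpa [hp, hy] using hconvex p y (1 - t) t (by linarith) ht.le (by ring)
  have hnorm : ‖u - ((1 - t) • p + t • y)‖ ^ 2
      = ‖u - p‖ ^ 2 - 2 * t * ⟪u - p, y - p⟫ + t ^ 2 * ‖y - p‖ ^ 2 := by
    rw [show u - ((1 - t) • p + t • y) = (u - p) - t • (y - p) by module, norm_sub_sq_real,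
      real_inner_smul_right, norm_smul, Real.norm_eq_abs, abs_of_pos ht, mul_pow]
    ring
  have hstep := (hmin _).trans (add_le_add_left hconv _)
  rw [hp, ← EReal.coe_add, ← EReal.coe_add, EReal.coe_le_coe_iff, hnorm] at hstep
  have hscaled : t * (ψp + ⟪u - p, y - p⟫ / τ - t * (‖y - p‖ ^ 2 / (2 * τ)) - ψy) ≤ 0 := by
    have expand : t * (ψp + ⟪u - p, y - p⟫ / τ - t * (‖y - p‖ ^ 2 / (2 * τ)) - ψy)
        = ψp + ‖u - p‖ ^ 2 / (2 * τ) - ((1 - t) * ψp + t * ψy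
          + (‖u - p‖ ^ 2 - 2 * t * ⟪u - p, y - p⟫ + t ^ 2 * ‖y - p‖ ^ 2) / (2 * τ)) := by
      field_simp
      ring
    linarith
  linarith [nonpos_of_mul_nonpos_right hscaled ht]

theorem composite_lower_bound_of_prox_step {L α : ℝ} (hL : 0 < L) {x y g d : E}
    {fx fy fp ψp ψy : ℝ}
    (hdescent : fp - fx - ⟪g, (x - (1 / L) • d) - x⟫ ≤ L / 2 * ‖(x - (1 / L) • d) - x‖ ^ 2)
    (hstrong : fx + ⟪g, y - x⟫ + α / 2 * ‖y - x‖ ^ 2 ≤ fy)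
    (hsub : ψp + ⟪(x - (1 / L) • g) - (x - (1 / L) • d), y - (x - (1 / L) • d)⟫ / (1 / L)
      ≤ ψy) :
    fp + ψp + (⟪d, y - x⟫ + 1 / (2 * L) * ‖d‖ ^ 2 + α / 2 * ‖y - x‖ ^ 2) ≤ fy + ψy := by
  have hsub_eq : ⟪(x - (1 / L) • g) - (x - (1 / L) • d), y - (x - (1 / L) • d)⟫ / (1 / L)
      = ⟪d, y - x⟫ - ⟪g, y - x⟫ + (‖d‖ ^ 2 - ⟪g, d⟫) / L := by
    rw [show (x - (1 / L) • g) - (x - (1 / L) • d) = (1 / L) • (d - g) by module,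
      show y - (x - (1 / L) • d) = (y - x) + (1 / L) • d by module]
    simp only [real_inner_smul_left, real_inner_smul_right, inner_add_right, inner_sub_left,
      real_inner_self_eq_norm_sq]
    field_simp
  have hlin_eq : ⟪g, (x - (1 / L) • d) - x⟫ = -⟪g, d⟫ / L := by
    rw [show (x - (1 / L) • d) - x = -((1 / L) • d) by module, inner_neg_right,
      real_inner_smul_right]
    ring
  have hquad_eq : L / 2 * ‖(x - (1 / L) • d) - x‖ ^ 2 = 1 / (2 * L) * ‖d‖ ^ 2 := by
    rw [show (x - (1 / L) • d) - x = -((1 / L) • d) by module, norm_neg, norm_smul,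
      Real.norm_eq_abs, abs_of_pos (by positivity), mul_pow]
    field_simp
  rw [hsub_eq] at hsub
  rw [hlin_eq, hquad_eq] at hdescent
  linear_combination hdescent + hstrong + hsub

end Prox

theorem prox_gradient_strong_convexity_bound_general {n : ℕ} (L α : ℝ) (hL : 0 < L)
    (f : EuclideanSpace ℝ (Fin n) → ℝ)
    (f' : EuclideanSpace ℝ (Fin n) → EuclideanSpace ℝ (Fin n))
    (hsmooth : ∀ x y : EuclideanSpace ℝ (Fin n),
      |f x - f y - ⟪f' y, x - y⟫| ≤ L / 2 * ‖x - y‖ ^ 2)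
    (hstrong : ∀ x y : EuclideanSpace ℝ (Fin n),
      f x + ⟪f' x, y - x⟫ + α / 2 * ‖y - x‖ ^ 2 ≤ f y)
    (Ψ : EuclideanSpace ℝ (Fin n) → EReal)
    (hconvex : ∀ x y : EuclideanSpace ℝ (Fin n), ∀ a b : ℝ, 0 ≤ a → 0 ≤ b → a + b = 1 →
      Ψ (a • x + b • y) ≤ (a : EReal) * Ψ x + (b : EReal) * Ψ y)
    (prox : ℝ → EuclideanSpace ℝ (Fin n) → EuclideanSpace ℝ (Fin n))
    (hprox : ∀ t : ℝ, 0 < t → ∀ x z : EuclideanSpace ℝ (Fin n),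
      Ψ (prox t x) + ((‖x - prox t x‖ ^ 2 / (2 * t) : ℝ) : EReal)
        ≤ Ψ z + ((‖x - z‖ ^ 2 / (2 * t) : ℝ) : EReal))
    (F : EuclideanSpace ℝ (Fin n) → EReal)
    (hF : ∀ x, F x = (f x : EReal) + Ψ x)
    (G : ℝ → EuclideanSpace ℝ (Fin n) → EuclideanSpace ℝ (Fin n))
    (hG : ∀ t x, G t x = t⁻¹ • (x - prox t (x - t • f' x))) :
    ∀ x y : EuclideanSpace ℝ (Fin n),
      F (x - (1 / L) • G (1 / L) x)
        + ((⟪G (1 / L) x, y - x⟫ + 1 / (2 * L) * ‖G (1 / L) x‖ ^ 2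
            + α / 2 * ‖y - x‖ ^ 2 : ℝ) : EReal)
        ≤ F y := by
  intro x y
  set d := G (1 / L) x
  have hprox_x : prox (1 / L) (x - (1 / L) • f' x) = x - (1 / L) • d := by
    simp only [d, hG, one_div, inv_inv, smul_smul, inv_mul_cancel₀ hL.ne', one_smul,
      sub_sub_cancel]
  have hmin := hprox (1 / L) (by positivity) (x - (1 / L) • f' x)
  rw [hprox_x] at hmin
  rw [hF, hF]
  refine EReal.coe_add_add_coe_le_of_forall_coe (hmin y) fun a b ha hb => ?_
  exact composite_lower_bound_of_prox_step hL (abs_le.mp (hsmooth _ x)).2 (hstrong x y)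
    (subgradient_ineq_of_prox_min hconvex (by positivity) ha hb hmin)

/-- lower quadratic bound for strongly convex composite functions
in terms of the prox-gradient. -/
theorem prox_gradient_strong_convexity_bound {n : ℕ} (L α : ℝ) (hL : 0 < L) (hα : 0 < α)
    (f : EuclideanSpace ℝ (Fin n) → ℝ)
    (f' : EuclideanSpace ℝ (Fin n) → EuclideanSpace ℝ (Fin n))
    (hdiff : ∀ x, HasGradientAt f (f' x) x)
    (hsmooth : ∀ x y : EuclideanSpace ℝ (Fin n),
      |f x - f y - ⟪f' y, x - y⟫| ≤ L / 2 * ‖x - y‖ ^ 2)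
    (hstrong : ∀ x y : EuclideanSpace ℝ (Fin n),
      f x + ⟪f' x, y - x⟫ + α / 2 * ‖y - x‖ ^ 2 ≤ f y)
    (Ψ : EuclideanSpace ℝ (Fin n) → EReal)
    (hproper : (∀ x, Ψ x ≠ ⊥) ∧ (∃ x, Ψ x ≠ ⊤))
    (hclosed : LowerSemicontinuous Ψ)
    (hconvex : ∀ x y : EuclideanSpace ℝ (Fin n), ∀ a b : ℝ, 0 ≤ a → 0 ≤ b → a + b = 1 →
      Ψ (a • x + b • y) ≤ (a : EReal) * Ψ x + (b : EReal) * Ψ y)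
    (prox : ℝ → EuclideanSpace ℝ (Fin n) → EuclideanSpace ℝ (Fin n))
    (hprox : ∀ t : ℝ, 0 < t → ∀ x z : EuclideanSpace ℝ (Fin n),
      Ψ (prox t x) + ((‖x - prox t x‖ ^ 2 / (2 * t) : ℝ) : EReal)
        ≤ Ψ z + ((‖x - z‖ ^ 2 / (2 * t) : ℝ) : EReal))
    (F : EuclideanSpace ℝ (Fin n) → EReal)
    (hF : ∀ x, F x = (f x : EReal) + Ψ x)
    (G : ℝ → EuclideanSpace ℝ (Fin n) → EuclideanSpace ℝ (Fin n))
    (hG : ∀ t x, G t x = t⁻¹ • (x - prox t (x - t • f' x))) :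
    ∀ x y : EuclideanSpace ℝ (Fin n),
      F (x - (1 / L) • G (1 / L) x)
        + ((⟪G (1 / L) x, y - x⟫ + 1 / (2 * L) * ‖G (1 / L) x‖ ^ 2
            + α / 2 * ‖y - x‖ ^ 2 : ℝ) : EReal)
        ≤ F y :=
  prox_gradient_strong_convexity_bound_general L α hL f f' hsmooth hstrong Ψ hconvex prox hprox F hF
    G hG
end

section
/- Let z, y ∈ ℝⁿ and let δ, ρ, σ be nonnegative scalars with 0 < δ ≤ ‖z − y‖. Suppose ρ + σ ≥ δ and |ρ² − σ²| ≤ δ². Set λ = (δ² + ρ² − σ²)/(2δ²) and z* = (1−λ)z + λy. Then every point w with ‖w − z‖ ≤ ρ and ‖w − y‖ ≤ σ satisfies ‖w − z*‖² ≤ ρ²/2 + σ²/2 − δ²/4 − (ρ² − σ²)²/(4δ²). -/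
open scoped RealInnerProductSpace

set_option maxHeartbeats 1000000 in
/-- intersection of two balls with the optimal choice of `λ`. -/
theorem ball_intersection_optimal_lambda {n : ℕ} (z y : EuclideanSpace ℝ (Fin n))
    (δ ρ σ : ℝ) (hρ : 0 ≤ ρ) (hσ : 0 ≤ σ) (hδpos : 0 < δ)
    (hδle : δ ≤ ‖z - y‖) (hsum : δ ≤ ρ + σ) (habs : |ρ ^ 2 - σ ^ 2| ≤ δ ^ 2)
    (zstar : EuclideanSpace ℝ (Fin n))
    (hzstar : zstar = (1 - (δ ^ 2 + ρ ^ 2 - σ ^ 2) / (2 * δ ^ 2)) • z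
        + ((δ ^ 2 + ρ ^ 2 - σ ^ 2) / (2 * δ ^ 2)) • y) :
    ∀ w : EuclideanSpace ℝ (Fin n), ‖w - z‖ ≤ ρ → ‖w - y‖ ≤ σ →
      ‖w - zstar‖ ^ 2
        ≤ ρ ^ 2 / 2 + σ ^ 2 / 2 - δ ^ 2 / 4 - (ρ ^ 2 - σ ^ 2) ^ 2 / (4 * δ ^ 2) := by
  intro w hw1 hw2
  set lam : ℝ := (δ ^ 2 + ρ ^ 2 - σ ^ 2) / (2 * δ ^ 2) with hlam
  have hδ2 : (0:ℝ) < δ ^ 2 := by positivity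
  have habs' := abs_le.mp habs
  have hlam0 : 0 ≤ lam := by
    apply div_nonneg; · linarith [habs'.2]
    · linarith
  have hlam1 : lam ≤ 1 := by
    rw [hlam, div_le_one (by positivity)]; linarith [habs'.1]
  have hwz : w - zstar = (1 - lam) • (w - z) + lam • (w - y) := by
    rw [hzstar, hlam]; module
  have key : ‖w - zstar‖^2 =
      (1-lam)*‖w-z‖^2 + lam*‖w-y‖^2 - lam*(1-lam)*‖z-y‖^2 := by
    have h2 := norm_sub_sq_real (w - y) (w - z)
    rw [show w - y - (w - z) = z - y from by abel,
      real_inner_comm] at h2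
    rw [hwz, norm_add_sq_real, norm_smul, norm_smul, real_inner_smul_left,
      real_inner_smul_right, Real.norm_eq_abs, Real.norm_eq_abs,
      abs_of_nonneg hlam0, abs_of_nonneg (by linarith : (0:ℝ) ≤ 1 - lam)]
    linear_combination (lam * (1 - lam)) * h2
  have hD : δ^2 ≤ ‖z - y‖^2 := by nlinarith [norm_nonneg (z - y)]
  have ha : ‖w - z‖^2 ≤ ρ^2 := by nlinarith [norm_nonneg (w - z)]
  have hb : ‖w - y‖^2 ≤ σ^2 := by nlinarith [norm_nonneg (w - y)]
  have heq : (1-lam)*ρ^2 + lam*σ^2 - lam*(1-lam)*δ^2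
      = ρ ^ 2 / 2 + σ ^ 2 / 2 - δ ^ 2 / 4 - (ρ ^ 2 - σ ^ 2) ^ 2 / (4 * δ ^ 2) := by
    rw [hlam]; field_simp; ring
  rw [key, ← heq]
  nlinarith [mul_nonneg hlam0 (sub_nonneg.mpr hlam1),
    mul_nonneg (sub_nonneg.mpr hlam1) (sub_nonneg.mpr ha),
    mul_nonneg hlam0 (sub_nonneg.mpr hb),
    mul_nonneg (mul_nonneg hlam0 (sub_nonneg.mpr hlam1)) (sub_nonneg.mpr hD)]
end

section
/- Fix points z, y ∈ ℝⁿ and scalars r₁, r₂ > 0, ε ∈ [0,1], and C ≥ 0 such that r₁² − εr₂² − C ≥ 0 and (1−ε)r₂² − C ≥ 0. Suppose ‖y − z‖ ≥ r₂ and ‖y − z‖ ≤ √(r₁² − εr₂² − C) + √((1−ε)r₂² − C). Define z* = (1−λ)z + λy with λ = (2r₂² − r₁²)/(2r₂²) if r₁² ≤ 2r₂², and z* = z if r₁² > 2r₂². Then every point w satisfying ‖w − y‖² ≤ r₁² − εr₂² − C and ‖w − z‖² ≤ (1−ε)r₂² − C satisfies ‖w − z*‖² ≤ (1 − √ε)r₁²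 − C. -/
/-!
On the segment `z* = (1 - λ) z + λ y` one has the exact identity
`‖w - z*‖² = (1 - λ)‖w - z‖² + λ‖w - y‖² - λ(1 - λ)‖y - z‖²`, so the two ball constraints
together with `‖y - z‖ ≥ r₂` bound `‖w - z*‖²` by a quadratic expression in `λ`.
For `λ = (2r₂² - r₁²)/(2r₂²)` this bound equals `(1 - √ε) r₁² - C - (r₁² - 2√ε r₂²)² / (4 r₂²)`.
When `r₁² > 2 r₂²` the centre `z` already works, because `1 - ε ≤ 2 (1 - √ε)`.
-/

open scoped RealInnerProductSpace

section ConvexCombination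

variable {E : Type*} [NormedAddCommGroup E] [InnerProductSpace ℝ E]

theorem norm_sub_convex_combination_sq (w y z : E) (l : ℝ) :
    ‖w - ((1 - l) • z + l • y)‖ ^ 2
      = (1 - l) * ‖w - z‖ ^ 2 + l * ‖w - y‖ ^ 2 - l * (1 - l) * ‖y - z‖ ^ 2 := by
  have hw : w - ((1 - l) • z + l • y) = (w - z) - l • (y - z) := by
    simp only [sub_smul, one_smul, smul_sub]
    abel
  have hwy : ‖w - y‖ ^ 2 = ‖w - z‖ ^ 2 - 2 * ⟪w - z, y - z⟫ + ‖y - z‖ ^ 2 := by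
    rw [← norm_sub_sq_real, sub_sub_sub_cancel_right]
  rw [hw, norm_sub_sq_real, real_inner_smul_right, norm_smul, mul_pow, Real.norm_eq_abs, sq_abs]
  linear_combination -l * hwy

theorem norm_sub_convex_combination_sq_le {w y z : E} {a b r l : ℝ}
    (hl0 : 0 ≤ l) (hl1 : l ≤ 1) (hy : ‖w - y‖ ^ 2 ≤ a) (hz : ‖w - z‖ ^ 2 ≤ b)
    (hr : 0 ≤ r) (hyz : r ≤ ‖y - z‖) :
    ‖w - ((1 - l) • z + l • y)‖ ^ 2 ≤ (1 - l) * b + l * a - l * (1 - l) * r ^ 2 := by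
  have hr2 : r ^ 2 ≤ ‖y - z‖ ^ 2 := pow_le_pow_left₀ hr hyz 2
  have hl : 0 ≤ l * (1 - l) := mul_nonneg hl0 (sub_nonneg.2 hl1)
  rw [norm_sub_convex_combination_sq]
  linarith [mul_le_mul_of_nonneg_left hy hl0, mul_le_mul_of_nonneg_left hz (sub_nonneg.2 hl1),
    mul_le_mul_of_nonneg_left hr2 hl]

end ConvexCombination

theorem convex_bound_eq_sub_sq {r₁ r₂ l : ℝ} (s C : ℝ) (hr₂ : r₂ ≠ 0)
    (hl : l = (2 * r₂ ^ 2 - r₁ ^ 2) / (2 * r₂ ^ 2)) :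
    (1 - l) * ((1 - s ^ 2) * r₂ ^ 2 - C) + l * (r₁ ^ 2 - s ^ 2 * r₂ ^ 2 - C)
        - l * (1 - l) * r₂ ^ 2
      = (1 - s) * r₁ ^ 2 - C - (r₁ ^ 2 - 2 * s * r₂ ^ 2) ^ 2 / (4 * r₂ ^ 2) := by
  subst hl
  field_simp
  ring

theorem one_sub_mul_le_one_sub_sqrt_mul {ε r₁ r₂ : ℝ} (hε0 : 0 ≤ ε) (hε1 : ε ≤ 1)
    (h : 2 * r₂ ^ 2 < r₁ ^ 2) :
    (1 - ε) * r₂ ^ 2 ≤ (1 - Real.sqrt ε) * r₁ ^ 2 := by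
  set s := Real.sqrt ε
  have hs1 : s ≤ 1 := Real.sqrt_le_one.2 hε1
  calc (1 - ε) * r₂ ^ 2 = (1 - s) * (1 + s) * r₂ ^ 2 := by
        rw [← Real.sq_sqrt hε0]; ring
    _ ≤ (1 - s) * (2 * r₂ ^ 2) := by
        nlinarith [mul_nonneg (sq_nonneg (1 - s)) (sq_nonneg r₂)]
    _ ≤ (1 - s) * r₁ ^ 2 := mul_le_mul_of_nonneg_left h.le (sub_nonneg.2 hs1)

theorem ball_intersection_corollary_general {n : ℕ} (z y : EuclideanSpace ℝ (Fin n))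
    (r₁ r₂ ε C : ℝ) (hr₂ : 0 < r₂) (hε0 : 0 ≤ ε) (hε1 : ε ≤ 1)
    (hlb : r₂ ≤ ‖y - z‖)
    (zstar : EuclideanSpace ℝ (Fin n))
    (hzstar : zstar =
      if r₁ ^ 2 ≤ 2 * r₂ ^ 2 then
        (1 - (2 * r₂ ^ 2 - r₁ ^ 2) / (2 * r₂ ^ 2)) • z
          + ((2 * r₂ ^ 2 - r₁ ^ 2) / (2 * r₂ ^ 2)) • y
      else z) :
    ∀ w : EuclideanSpace ℝ (Fin n),
      ‖w - y‖ ^ 2 ≤ r₁ ^ 2 - ε * r₂ ^ 2 - C →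
      ‖w - z‖ ^ 2 ≤ (1 - ε) * r₂ ^ 2 - C →
      ‖w - zstar‖ ^ 2 ≤ (1 - Real.sqrt ε) * r₁ ^ 2 - C := by
  intro w hy hz
  split_ifs at hzstar with hr
  · set l := (2 * r₂ ^ 2 - r₁ ^ 2) / (2 * r₂ ^ 2) with hl
    have hl0 : 0 ≤ l := div_nonneg (by linarith) (by positivity)
    have hl1 : l ≤ 1 := (div_le_one (by positivity)).2 (by nlinarith)
    have hbound := norm_sub_convex_combination_sq_le hl0 hl1 hy hz hr₂.le hlb
    rw [← Real.sq_sqrt hε0, convex_bound_eq_sub_sq (Real.sqrt ε) C hr₂.ne' hl] at hbound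
    have hsq : 0 ≤ (r₁ ^ 2 - 2 * Real.sqrt ε * r₂ ^ 2) ^ 2 / (4 * r₂ ^ 2) := by positivity
    rw [hzstar]
    linarith
  · rw [hzstar]
    linarith [one_sub_mul_le_one_sub_sqrt_mul hε0 hε1 (not_le.1 hr)]

/-- the key ball-intersection corollary used in the geometric
descent analysis. -/
theorem ball_intersection_corollary {n : ℕ} (z y : EuclideanSpace ℝ (Fin n))
    (r₁ r₂ ε C : ℝ) (hr₁ : 0 < r₁) (hr₂ : 0 < r₂) (hε0 : 0 ≤ ε) (hε1 : ε ≤ 1)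
    (hC : 0 ≤ C)
    (h1 : 0 ≤ r₁ ^ 2 - ε * r₂ ^ 2 - C) (h2 : 0 ≤ (1 - ε) * r₂ ^ 2 - C)
    (hlb : r₂ ≤ ‖y - z‖)
    (hub : ‖y - z‖ ≤ Real.sqrt (r₁ ^ 2 - ε * r₂ ^ 2 - C)
        + Real.sqrt ((1 - ε) * r₂ ^ 2 - C))
    (zstar : EuclideanSpace ℝ (Fin n))
    (hzstar : zstar =
      if r₁ ^ 2 ≤ 2 * r₂ ^ 2 then
        (1 - (2 * r₂ ^ 2 - r₁ ^ 2) / (2 * r₂ ^ 2)) • z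
          + ((2 * r₂ ^ 2 - r₁ ^ 2) / (2 * r₂ ^ 2)) • y
      else z) :
    ∀ w : EuclideanSpace ℝ (Fin n),
      ‖w - y‖ ^ 2 ≤ r₁ ^ 2 - ε * r₂ ^ 2 - C →
      ‖w - z‖ ^ 2 ≤ (1 - ε) * r₂ ^ 2 - C →
      ‖w - zstar‖ ^ 2 ≤ (1 - Real.sqrt ε) * r₁ ^ 2 - C :=
  ball_intersection_corollary_general z y r₁ r₂ ε C hr₂ hε0 hε1 hlb zstar hzstar
end

section
/- Suppose F = f + Ψ where f : ℝⁿ → ℝ is α-strongly convex (α > 0) and L-smooth (L ≥ α) and Ψ : ℝⁿ → ℝ ∪ {+∞} is proper, closed and convex, and let x* be the minimizer of F. Suppose {M_k}_{k≥1} is a sequence of affine subspaces of ℝⁿ and {x_k}, {y_k}, {z_k} are sequences such that for each k ≥ 1: (i) y_k minimizes ‖y − x*‖ over y ∈ M_k; (ii) x_k minimizes F over M_k; (iii) z_k ∈ M_k satisfies ⟨G_{1/L}(z_k), y_k − z_k⟩ ≥ 0 and F(z̄_k) ≤ F(x_k) − (1/(2L))‖G_{1/L}(z_k)‖², where z̄_k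 = z_k − G_{1/L}(z_k)/L; and (iv) M_{k+1} contains the affine set z_k + span{y_k − z_k, G_{1/L}(z_k)}. Define the potential Φ_k = ‖y_k − x*‖² + 2(F(x_k) − F(x*))/α. Then for every k ≥ 1, Φ_{k+1} ≤ (1 − √(α/L)) Φ_k. -/
/-!
The prox-gradient point `z̄ = z - G/L` satisfies, for every `w`,
`F z̄ + ⟪G, w - z⟫ + ‖G‖²/(2L) + (α/2)‖w - z‖² ≤ F w`: smoothness bounds `f z̄` along the step,
strong convexity bounds `f w` from below at `z`, and the variational inequality of the prox
handles `Ψ`. At `w = x*`, together with `⟪G, y_k - z_k⟫ ≥ 0` and `‖y_k - x*‖ ≤ ‖z_k - x*‖`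
(as `z_k ∈ M_k`), this bounds `⟪G, y_k - x*⟫` from below. The subspace `M_{k+1}` contains both
`z̄` and `y_k - G/√(αL)`; comparing `x_{k+1}` with the first and `y_{k+1}` with the second gives
the contraction of the potential after expanding the square.
-/

open scoped RealInnerProductSpace
open Filter Topology

theorem le_of_forall_mem_Ioo_le_add_mul {a b c : ℝ}
    (h : ∀ ε ∈ Set.Ioo (0 : ℝ) 1, a ≤ b + ε * c) : a ≤ b := by
  have hlim : Tendsto (fun ε : ℝ => b + ε * c) (𝓝[>] 0) (𝓝 b) :=
    tendsto_nhdsWithin_of_tendsto_nhds <|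
      (show Continuous (fun ε : ℝ => b + ε * c) by fun_prop).tendsto' 0 b (by simp)
  exact ge_of_tendsto hlim (by filter_upwards [Ioo_mem_nhdsGT one_pos] using h)

theorem EReal.exists_eq_coe {x : EReal} (hx : x ≠ ⊤) (hx' : x ≠ ⊥) : ∃ r : ℝ, x = r :=
  ⟨x.toReal, (EReal.coe_toReal hx hx').symm⟩

section ProxGrad

variable {E : Type*} [NormedAddCommGroup E] [InnerProductSpace ℝ E]

theorem prox_add_inner_le {Ψ : E → EReal} (hΨbot : ∀ x, Ψ x ≠ ⊥)
    (hconvex : ∀ x y : E, ∀ a b : ℝ, 0 ≤ a → 0 ≤ b → a + b = 1 →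
      Ψ (a • x + b • y) ≤ (a : EReal) * Ψ x + (b : EReal) * Ψ y)
    {t : ℝ} (ht : 0 < t) {v p : E}
    (hp : ∀ u, Ψ p + ((‖v - p‖ ^ 2 / (2 * t) : ℝ) : EReal)
      ≤ Ψ u + ((‖v - u‖ ^ 2 / (2 * t) : ℝ) : EReal))
    (w : E) : Ψ p + ((⟪v - p, w - p⟫ / t : ℝ) : EReal) ≤ Ψ w := by
  by_cases hw : Ψ w = ⊤
  · simp [hw]
  have hp_top : Ψ p ≠ ⊤ := by
    intro h
    have hpw := hp w
    rw [h, EReal.top_add_coe, top_le_iff] at hpw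
    exact EReal.add_ne_top hw (EReal.coe_ne_top _) hpw
  obtain ⟨P, hP⟩ := EReal.exists_eq_coe hp_top (hΨbot p)
  obtain ⟨W, hW⟩ := EReal.exists_eq_coe hw (hΨbot w)
  rw [hP, hW, ← EReal.coe_add, EReal.coe_le_coe_iff]
  -- compare `p` with `u = (1 - ε) • p + ε • w` and let `ε → 0`
  refine le_of_forall_mem_Ioo_le_add_mul (c := ‖w - p‖ ^ 2 / (2 * t)) fun ε ⟨hε, hε1⟩ => ?_
  set u := (1 - ε) • p + ε • w
  have hu : Ψ u ≤ ((1 - ε) * P + ε * W : ℝ) := by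
    simpa [hP, hW] using hconvex p w (1 - ε) ε (by linarith) hε.le (by ring)
  obtain ⟨U, hU⟩ := EReal.exists_eq_coe (ne_top_of_le_ne_top (EReal.coe_ne_top _) hu) (hΨbot u)
  rw [hU, EReal.coe_le_coe_iff] at hu
  have hmin := hp u
  rw [hP, hU, ← EReal.coe_add, ← EReal.coe_add, EReal.coe_le_coe_iff] at hmin
  have hvu : ‖v - u‖ ^ 2 = ‖v - p‖ ^ 2 - 2 * ε * ⟪v - p, w - p⟫ + ε ^ 2 * ‖w - p‖ ^ 2 := by
    rw [show v - u = (v - p) - ε • (w - p) by simp only [u]; module, norm_sub_sq_real,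
      real_inner_smul_right, norm_smul, Real.norm_eq_abs, abs_of_pos hε]
    ring
  rw [hvu] at hmin
  have key : ε * (P + ⟪v - p, w - p⟫ / t) ≤ ε * (W + ε * (‖w - p‖ ^ 2 / (2 * t))) := by
    field_simp
    field_simp at hmin
    nlinarith
  exact le_of_mul_le_mul_left key hε

theorem proxGrad_descent {L α t : ℝ} (ht : 0 < t) (htL : t * L ≤ 1) {f : E → ℝ} {f' : E → E}
    (hsmooth : ∀ x y, f x - f y - ⟪f' y, x - y⟫ ≤ L / 2 * ‖x - y‖ ^ 2)
    (hstrong : ∀ x y, f x + ⟪f' x, y - x⟫ + α / 2 * ‖y - x‖ ^ 2 ≤ f y)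
    {Ψ : E → EReal} (hΨbot : ∀ x, Ψ x ≠ ⊥)
    (hconvex : ∀ x y : E, ∀ a b : ℝ, 0 ≤ a → 0 ≤ b → a + b = 1 →
      Ψ (a • x + b • y) ≤ (a : EReal) * Ψ x + (b : EReal) * Ψ y)
    {z g : E}
    (hp : ∀ u, Ψ (z - t • g) + ((‖z - t • f' z - (z - t • g)‖ ^ 2 / (2 * t) : ℝ) : EReal)
      ≤ Ψ u + ((‖z - t • f' z - u‖ ^ 2 / (2 * t) : ℝ) : EReal))
    (w : E) :
    (f (z - t • g) : EReal) + Ψ (z - t • g)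
        + ((⟪g, w - z⟫ + t / 2 * ‖g‖ ^ 2 + α / 2 * ‖w - z‖ ^ 2 : ℝ) : EReal)
      ≤ f w + Ψ w := by
  set c := ⟪g, w - z⟫ + t / 2 * ‖g‖ ^ 2 + α / 2 * ‖w - z‖ ^ 2
  set r := ⟪z - t • f' z - (z - t • g), w - (z - t • g)⟫ / t
  have hr : r = ⟪g, w - z⟫ + t * ‖g‖ ^ 2 - ⟪f' z, w - z⟫ - t * ⟪f' z, g⟫ := by
    simp only [r]
    rw [show z - t • f' z - (z - t • g) = t • (g - f' z) by module,
      show w - (z - t • g) = (w - z) + t • g by module, real_inner_smul_left,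
      mul_div_cancel_left₀ _ ht.ne']
    simp only [inner_sub_left, inner_add_right, real_inner_smul_right, real_inner_self_eq_norm_sq]
    ring
  have hdescent : f (z - t • g) + c - r ≤ f w := by
    have hsm := hsmooth (z - t • g) z
    rw [show z - t • g - z = -(t • g) by abel, inner_neg_right, real_inner_smul_right, norm_neg,
      norm_smul, Real.norm_eq_abs, abs_of_pos ht] at hsm
    have hst := hstrong z w
    simp only [c, hr]
    nlinarith [mul_nonneg (mul_nonneg ht.le (sq_nonneg ‖g‖)) (sub_nonneg.mpr htL)]
  have hsplit : (f (z - t • g) : EReal) + Ψ (z - t • g) + c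
      = ((f (z - t • g) + c - r : ℝ) : EReal) + (Ψ (z - t • g) + r) := by
    rw [add_comm (Ψ _) (r : EReal), ← add_assoc, ← EReal.coe_add, sub_add_cancel,
      EReal.coe_add (f _) c]
    ac_rfl
  rw [hsplit]
  exact add_le_add (EReal.coe_le_coe_iff.mpr hdescent) (prox_add_inner_le hΨbot hconvex ht hp w)

theorem norm_sub_sq_le_of_le_norm_sub_smul {y₁ y₀ x g : E} {s : ℝ}
    (h : ‖y₁ - x‖ ≤ ‖y₀ - s • g - x‖) :
    ‖y₁ - x‖ ^ 2 ≤ ‖y₀ - x‖ ^ 2 - 2 * s * ⟪g, y₀ - x⟫ + s ^ 2 * ‖g‖ ^ 2 := by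
  calc ‖y₁ - x‖ ^ 2 ≤ ‖(y₀ - x) - s • g‖ ^ 2 := by
        rw [sub_right_comm]; gcongr
    _ = ‖y₀ - x‖ ^ 2 - 2 * s * ⟪g, y₀ - x⟫ + s ^ 2 * ‖g‖ ^ 2 := by
        rw [norm_sub_sq_real, real_inner_smul_right, norm_smul, mul_pow, Real.norm_eq_abs, sq_abs,
          real_inner_comm]
        ring

end ProxGrad

theorem potential_step_algebra {α L q D₀ D₁ I N a : ℝ} (hα : 0 < α) (hL : 0 < L) (hq : 0 ≤ q)
    (hq2 : q ^ 2 = α / L)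
    (hD : D₁ ≤ D₀ - 2 * (q / α) * I + (q / α) ^ 2 * N)
    (hI : a + 1 / (2 * L) * N + α / 2 * D₀ ≤ I) :
    D₁ + 2 / α * a ≤ (1 - q) * (D₀ + 2 / α * (a + 1 / (2 * L) * N)) := by
  have hsI := mul_le_mul_of_nonneg_left hI (by positivity : 0 ≤ 2 * (q / α))
  have hs2 : (q / α) ^ 2 * N = 1 / (α * L) * N := by
    rw [div_pow, hq2]; field_simp
  have hid : D₀ - 2 * (q / α) * (a + 1 / (2 * L) * N + α / 2 * D₀) + 1 / (α * L) * N
      = (1 - q) * (D₀ + 2 / α * (a + 1 / (2 * L) * N)) - 2 / α * a := by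
    field_simp
    ring
  linarith

-- `Φ_k = potential α ‖y_k - x*‖² (F x_k) (F x*)`
noncomputable def potential (α d : ℝ) (v vstar : EReal) : EReal :=
  (d : EReal) + ((2 / α : ℝ) : EReal) * (v - vstar)

theorem potential_mono {α : ℝ} (hα : 0 ≤ α) (d : ℝ) {v v' : EReal} (vstar : EReal)
    (h : v ≤ v') : potential α d v vstar ≤ potential α d v' vstar := by
  unfold potential
  gcongr
  exact EReal.sub_le_sub h le_rfl

theorem potential_coe (α d a b : ℝ) :
    potential α d a b = ((d + 2 / α * (a - b) : ℝ) : EReal) := by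
  simp only [potential, ← EReal.coe_sub, ← EReal.coe_mul, ← EReal.coe_add]

theorem potential_le_mul_of_coe {α q d₀ d₁ a b c : ℝ} (hα : 0 ≤ α) (hq : q ≤ 1) {v₀ v₁ : EReal}
    (h₁ : v₁ ≤ a) (h₀ : (a : EReal) + c ≤ v₀)
    (h : d₁ + 2 / α * (a - b) ≤ (1 - q) * (d₀ + 2 / α * (a - b + c))) :
    potential α d₁ v₁ b ≤ ((1 - q : ℝ) : EReal) * potential α d₀ v₀ b :=
  calc potential α d₁ v₁ b ≤ potential α d₁ a b := potential_mono hα d₁ _ h₁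
    _ ≤ ((1 - q : ℝ) : EReal) * potential α d₀ (a + c : ℝ) b := by
        rw [potential_coe, potential_coe, ← EReal.coe_mul, EReal.coe_le_coe_iff]
        linarith
    _ ≤ ((1 - q : ℝ) : EReal) * potential α d₀ v₀ b :=
        mul_le_mul_of_nonneg_left (potential_mono hα d₀ _ (EReal.coe_add a c ▸ h₀))
          (EReal.coe_nonneg.mpr (sub_nonneg.mpr hq))

theorem idealized_algorithm_strongly_convex_potential_general {n : ℕ} (L α : ℝ)
    (hα : 0 < α) (hαL : α ≤ L)
    (f : EuclideanSpace ℝ (Fin n) → ℝ)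
    (f' : EuclideanSpace ℝ (Fin n) → EuclideanSpace ℝ (Fin n))
    (hsmooth : ∀ x y : EuclideanSpace ℝ (Fin n),
      |f x - f y - ⟪f' y, x - y⟫| ≤ L / 2 * ‖x - y‖ ^ 2)
    (hstrong : ∀ x y : EuclideanSpace ℝ (Fin n),
      f x + ⟪f' x, y - x⟫ + α / 2 * ‖y - x‖ ^ 2 ≤ f y)
    (Ψ : EuclideanSpace ℝ (Fin n) → EReal)
    (hproper : (∀ x, Ψ x ≠ ⊥) ∧ (∃ x, Ψ x ≠ ⊤))
    (hconvex : ∀ x y : EuclideanSpace ℝ (Fin n), ∀ a b : ℝ, 0 ≤ a → 0 ≤ b → a + b = 1 →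
      Ψ (a • x + b • y) ≤ (a : EReal) * Ψ x + (b : EReal) * Ψ y)
    (prox : ℝ → EuclideanSpace ℝ (Fin n) → EuclideanSpace ℝ (Fin n))
    (hprox : ∀ t : ℝ, 0 < t → ∀ x z : EuclideanSpace ℝ (Fin n),
      Ψ (prox t x) + ((‖x - prox t x‖ ^ 2 / (2 * t) : ℝ) : EReal)
        ≤ Ψ z + ((‖x - z‖ ^ 2 / (2 * t) : ℝ) : EReal))
    (F : EuclideanSpace ℝ (Fin n) → EReal)
    (hF : ∀ x, F x = (f x : EReal) + Ψ x)
    (G : ℝ → EuclideanSpace ℝ (Fin n) → EuclideanSpace ℝ (Fin n))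
    (hG : ∀ t x, G t x = t⁻¹ • (x - prox t (x - t • f' x)))
    (xstar : EuclideanSpace ℝ (Fin n)) (hxstar : ∀ w, F xstar ≤ F w)
    (M : ℕ → AffineSubspace ℝ (EuclideanSpace ℝ (Fin n)))
    (x y z : ℕ → EuclideanSpace ℝ (Fin n))
    (hy : ∀ k, 1 ≤ k → y k ∈ M k ∧ ∀ w ∈ M k, ‖y k - xstar‖ ≤ ‖w - xstar‖)
    (hx : ∀ k, 1 ≤ k → x k ∈ M k ∧ ∀ w ∈ M k, F (x k) ≤ F w)
    (hz : ∀ k, 1 ≤ k → z k ∈ M k ∧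
      0 ≤ ⟪G (1 / L) (z k), y k - z k⟫ ∧
      F (z k - (1 / L) • G (1 / L) (z k))
        ≤ F (x k) - ((1 / (2 * L) * ‖G (1 / L) (z k)‖ ^ 2 : ℝ) : EReal))
    (hM : ∀ k, 1 ≤ k → ∀ a c : ℝ,
      z k + a • (y k - z k) + c • G (1 / L) (z k) ∈ M (k + 1)) :
    ∀ k, 1 ≤ k →
      ((‖y (k + 1) - xstar‖ ^ 2 : ℝ) : EReal)
          + ((2 / α : ℝ) : EReal) * (F (x (k + 1)) - F xstar)
        ≤ ((1 - Real.sqrt (α / L) : ℝ) : EReal)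
          * (((‖y k - xstar‖ ^ 2 : ℝ) : EReal)
              + ((2 / α : ℝ) : EReal) * (F (x k) - F xstar)) := by
  intro k hk
  obtain ⟨hΨbot, w₀, hw₀⟩ := hproper
  obtain ⟨hzM, hzy, hzF⟩ := hz k hk
  have hL : 0 < L := hα.trans_le hαL
  set g := G (1 / L) (z k)
  set zb := z k - (1 / L) • g
  set c := 1 / (2 * L) * ‖g‖ ^ 2
  set q := Real.sqrt (α / L)
  have hprox_zb : prox (1 / L) (z k - (1 / L) • f' (z k)) = zb := by
    rw [show zb = z k - (1 / L) • G (1 / L) (z k) from rfl, hG, smul_inv_smul₀ (by positivity),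
      sub_sub_cancel]
  have hdescent := proxGrad_descent (one_div_pos.mpr hL) (one_div_mul_cancel hL.ne').le
    (fun x y => (abs_le.mp (hsmooth x y)).2) hstrong hΨbot hconvex
    (fun u => hprox_zb ▸ hprox _ (by positivity) _ u) xstar
  rw [← hF, ← hF, show 1 / L / 2 * ‖g‖ ^ 2 = c by ring] at hdescent
  have hF_bot (w) : F w ≠ ⊥ := by
    rw [hF]; exact EReal.add_ne_bot_iff.mpr ⟨EReal.coe_ne_bot _, hΨbot w⟩
  have hFstar_top : F xstar ≠ ⊤ := ne_top_of_le_ne_top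
    (by rw [hF]; exact EReal.add_ne_top (EReal.coe_ne_top _) hw₀) (hxstar w₀)
  obtain ⟨b, hb⟩ := EReal.exists_eq_coe hFstar_top (hF_bot xstar)
  obtain ⟨a, ha⟩ := EReal.exists_eq_coe (fun h => hFstar_top <| top_le_iff.mp <| by
    rwa [h, EReal.top_add_coe] at hdescent) (hF_bot zb)
  rw [ha, hb, ← EReal.coe_add, EReal.coe_le_coe_iff] at hdescent
  have hD := norm_sub_sq_le_of_le_norm_sub_smul ((hy (k + 1) (by omega)).2 (y k - (q / α) • g) <| by
    convert hM k hk 1 (-(q / α)) using 1; module)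
  have hI : a - b + c + α / 2 * ‖y k - xstar‖ ^ 2 ≤ ⟪g, y k - xstar⟫ := by
    have hyz : ‖y k - xstar‖ ≤ ‖xstar - z k‖ := norm_sub_rev xstar (z k) ▸ (hy k hk).2 _ hzM
    have : ⟪g, y k - xstar⟫ = ⟪g, y k - z k⟫ - ⟪g, xstar - z k⟫ := by
      rw [← inner_sub_right, sub_sub_sub_cancel_right]
    linarith [mul_le_mul_of_nonneg_left (pow_le_pow_left₀ (norm_nonneg _) hyz 2)
      (by positivity : (0 : ℝ) ≤ α / 2)]
  have hzbM : zb ∈ M (k + 1) := by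
    convert hM k hk 0 (-(1 / L)) using 1; module
  have hzb_le : (a : EReal) + c ≤ F (x k) :=
    ha ▸ (EReal.le_sub_iff_add_le (.inl (EReal.coe_ne_bot _)) (.inl (EReal.coe_ne_top _))).mp hzF
  rw [hb]
  exact potential_le_mul_of_coe hα.le (Real.sqrt_le_one.mpr (div_le_one_of_le₀ hαL hL.le))
    (ha ▸ (hx (k + 1) (by omega)).2 zb hzbM) hzb_le
    (potential_step_algebra hα hL (Real.sqrt_nonneg _) (Real.sq_sqrt (by positivity)) hD hI)

/-- potential decrease for the idealized algorithmic framework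
in the strongly convex composite setting: `Φ_{k+1} ≤ (1 − √(α/L)) Φ_k`. -/
theorem idealized_algorithm_strongly_convex_potential {n : ℕ} (L α : ℝ)
    (hα : 0 < α) (hαL : α ≤ L)
    (f : EuclideanSpace ℝ (Fin n) → ℝ)
    (f' : EuclideanSpace ℝ (Fin n) → EuclideanSpace ℝ (Fin n))
    (hdiff : ∀ x, HasGradientAt f (f' x) x)
    (hsmooth : ∀ x y : EuclideanSpace ℝ (Fin n),
      |f x - f y - ⟪f' y, x - y⟫| ≤ L / 2 * ‖x - y‖ ^ 2)
    (hstrong : ∀ x y : EuclideanSpace ℝ (Fin n),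
      f x + ⟪f' x, y - x⟫ + α / 2 * ‖y - x‖ ^ 2 ≤ f y)
    (Ψ : EuclideanSpace ℝ (Fin n) → EReal)
    (hproper : (∀ x, Ψ x ≠ ⊥) ∧ (∃ x, Ψ x ≠ ⊤))
    (hclosed : LowerSemicontinuous Ψ)
    (hconvex : ∀ x y : EuclideanSpace ℝ (Fin n), ∀ a b : ℝ, 0 ≤ a → 0 ≤ b → a + b = 1 →
      Ψ (a • x + b • y) ≤ (a : EReal) * Ψ x + (b : EReal) * Ψ y)
    (prox : ℝ → EuclideanSpace ℝ (Fin n) → EuclideanSpace ℝ (Fin n))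
    (hprox : ∀ t : ℝ, 0 < t → ∀ x z : EuclideanSpace ℝ (Fin n),
      Ψ (prox t x) + ((‖x - prox t x‖ ^ 2 / (2 * t) : ℝ) : EReal)
        ≤ Ψ z + ((‖x - z‖ ^ 2 / (2 * t) : ℝ) : EReal))
    (F : EuclideanSpace ℝ (Fin n) → EReal)
    (hF : ∀ x, F x = (f x : EReal) + Ψ x)
    (G : ℝ → EuclideanSpace ℝ (Fin n) → EuclideanSpace ℝ (Fin n))
    (hG : ∀ t x, G t x = t⁻¹ • (x - prox t (x - t • f' x)))
    (xstar : EuclideanSpace ℝ (Fin n)) (hxstar : ∀ w, F xstar ≤ F w)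
    (M : ℕ → AffineSubspace ℝ (EuclideanSpace ℝ (Fin n)))
    (x y z : ℕ → EuclideanSpace ℝ (Fin n))
    (hy : ∀ k, 1 ≤ k → y k ∈ M k ∧ ∀ w ∈ M k, ‖y k - xstar‖ ≤ ‖w - xstar‖)
    (hx : ∀ k, 1 ≤ k → x k ∈ M k ∧ ∀ w ∈ M k, F (x k) ≤ F w)
    (hz : ∀ k, 1 ≤ k → z k ∈ M k ∧
      0 ≤ ⟪G (1 / L) (z k), y k - z k⟫ ∧
      F (z k - (1 / L) • G (1 / L) (z k))
        ≤ F (x k) - ((1 / (2 * L) * ‖G (1 / L) (z k)‖ ^ 2 : ℝ) : EReal))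
    (hM : ∀ k, 1 ≤ k → ∀ a c : ℝ,
      z k + a • (y k - z k) + c • G (1 / L) (z k) ∈ M (k + 1)) :
    ∀ k, 1 ≤ k →
      ((‖y (k + 1) - xstar‖ ^ 2 : ℝ) : EReal)
          + ((2 / α : ℝ) : EReal) * (F (x (k + 1)) - F xstar)
        ≤ ((1 - Real.sqrt (α / L) : ℝ) : EReal)
          * (((‖y k - xstar‖ ^ 2 : ℝ) : EReal)
              + ((2 / α : ℝ) : EReal) * (F (x k) - F xstar)) :=
  idealized_algorithm_strongly_convex_potential_general L α hα hαL f f' hsmooth hstrong Ψ hproper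
    hconvex prox hprox F hF G hG xstar hxstar M x y z hy hx hz hM
end

section
/- Let 0 < α ≤ L and set ε = α/L. Let ξ ≥ 0 and δ > 0, and define ρ̃² = (1−ε)δ² and σ̃² = ξ² − εδ². Define the updated squared radius ξ'² as follows: if σ̃² ≤ ρ̃² + δ², set ξ'² = ρ̃²/2 + σ̃²/2 − δ²/4 − (ρ̃² − σ̃²)²/(4δ²); otherwise set ξ'² = ρ̃². Then ξ'² ≤ (1 − √(α/L)) ξ². -/
/-- one-step contraction of the squared radius update in
geometric descent for the strongly convex case. -/
theorem geometric_descent_radius_contraction (α L ξ δ : ℝ)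
    (hα : 0 < α) (hαL : α ≤ L) (hξ : 0 ≤ ξ) (hδ : 0 < δ) :
    (if ξ ^ 2 - (α / L) * δ ^ 2 ≤ (1 - α / L) * δ ^ 2 + δ ^ 2 then
        ((1 - α / L) * δ ^ 2) / 2 + (ξ ^ 2 - (α / L) * δ ^ 2) / 2 - δ ^ 2 / 4
          - ((1 - α / L) * δ ^ 2 - (ξ ^ 2 - (α / L) * δ ^ 2)) ^ 2 / (4 * δ ^ 2)
      else (1 - α / L) * δ ^ 2)
      ≤ (1 - Real.sqrt (α / L)) * ξ ^ 2 := by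
  have hL : 0 < L := lt_of_lt_of_le hα hαL
  have hε1 : α / L ≤ 1 := (div_le_one hL).mpr hαL
  have hε0 : 0 < α / L := div_pos hα hL
  set c := Real.sqrt (α / L) with hc
  have hc2 : c ^ 2 = α / L := Real.sq_sqrt hε0.le
  have hc0 : 0 ≤ c := Real.sqrt_nonneg _
  have hc1 : c ≤ 1 := by
    rw [show (1 : ℝ) = Real.sqrt 1 by simp]
    exact Real.sqrt_le_sqrt hε1
  have hδ2 : (0:ℝ) < δ ^ 2 := by positivity
  split_ifs with h
  · rw [← hc2, ← sub_nonneg]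
    have key : (1 - c) * ξ ^ 2 -
        (((1 - c ^ 2) * δ ^ 2) / 2 + (ξ ^ 2 - c ^ 2 * δ ^ 2) / 2 - δ ^ 2 / 4
          - ((1 - c ^ 2) * δ ^ 2 - (ξ ^ 2 - c ^ 2 * δ ^ 2)) ^ 2 / (4 * δ ^ 2))
        = (ξ ^ 2 - 2 * c * δ ^ 2) ^ 2 / (4 * δ ^ 2) := by
      field_simp
      ring
    rw [key]
    positivity
  · push_neg at h
    have h2 : 2 * δ ^ 2 < ξ ^ 2 := by nlinarith
    rw [← hc2]
    nlinarith [mul_nonneg (sub_nonneg.mpr hc1) hδ2.le, sq_nonneg δ]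
end

section
/- Let 0 < α ≤ L with κ = L/α > 1, let f : ℝⁿ → ℝ be L-smooth and Ψ : ℝⁿ → ℝ ∪ {+∞} proper, closed and convex. Fix x₀ ∈ ℝⁿ and let w₀ = x₀, and for k ≥ 1 define x_k = prox_{Ψ/L}(w_{k−1} − ∇f(w_{k−1})/L) and w_k = x_k + θ(x_k − x_{k−1}) with θ = (√κ − 1)/(√κ + 1). Define y₀ = x₀ and y_k = x_k + (√κ − 1)(x_k − x_{k−1}) for k ≥ 1, and w̄̄_k = w_k − G_{1/L}(w_k)/α. Then for all k ≥ 0, y_{k+1} = (1/√κ) w̄̄_k + (1 − 1/√κ) y_k; in particular y_{k+1} is a convex combination of w̄̄_k and y_k. -/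
open scoped RealInnerProductSpace

/-- the auxiliary sequence `y_k` of Nesterov's accelerated
gradient method is a convex combination of `w̄̄_k` and `y_k`:
`y_{k+1} = (1/√κ) w̄̄_k + (1 − 1/√κ) y_k`. -/
theorem accelerated_gradient_y_convex_combination {n : ℕ} (L α κ θ : ℝ)
    (hα : 0 < α) (hαL : α ≤ L) (hκ : κ = L / α) (hκ1 : 1 < κ)
    (hθ : θ = (Real.sqrt κ - 1) / (Real.sqrt κ + 1))
    (f : EuclideanSpace ℝ (Fin n) → ℝ)
    (f' : EuclideanSpace ℝ (Fin n) → EuclideanSpace ℝ (Fin n))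
    (hdiff : ∀ x, HasGradientAt f (f' x) x)
    (hsmooth : ∀ x y : EuclideanSpace ℝ (Fin n),
      |f x - f y - ⟪f' y, x - y⟫| ≤ L / 2 * ‖x - y‖ ^ 2)
    (Ψ : EuclideanSpace ℝ (Fin n) → EReal)
    (hproper : (∀ x, Ψ x ≠ ⊥) ∧ (∃ x, Ψ x ≠ ⊤))
    (hclosed : LowerSemicontinuous Ψ)
    (hconvex : ∀ x y : EuclideanSpace ℝ (Fin n), ∀ a b : ℝ, 0 ≤ a → 0 ≤ b → a + b = 1 →
      Ψ (a • x + b • y) ≤ (a : EReal) * Ψ x + (b : EReal) * Ψ y)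
    (prox : ℝ → EuclideanSpace ℝ (Fin n) → EuclideanSpace ℝ (Fin n))
    (hprox : ∀ t : ℝ, 0 < t → ∀ x z : EuclideanSpace ℝ (Fin n),
      Ψ (prox t x) + ((‖x - prox t x‖ ^ 2 / (2 * t) : ℝ) : EReal)
        ≤ Ψ z + ((‖x - z‖ ^ 2 / (2 * t) : ℝ) : EReal))
    (G : ℝ → EuclideanSpace ℝ (Fin n) → EuclideanSpace ℝ (Fin n))
    (hG : ∀ t x, G t x = t⁻¹ • (x - prox t (x - t • f' x)))
    (x w y wbb : ℕ → EuclideanSpace ℝ (Fin n))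
    (hw0 : w 0 = x 0)
    (hxk : ∀ k : ℕ, x (k + 1) = prox (1 / L) (w k - (1 / L) • f' (w k)))
    (hwk : ∀ k : ℕ, w (k + 1) = x (k + 1) + θ • (x (k + 1) - x k))
    (hy0 : y 0 = x 0)
    (hyk : ∀ k : ℕ, y (k + 1) = x (k + 1) + (Real.sqrt κ - 1) • (x (k + 1) - x k))
    (hwbb : ∀ k : ℕ, wbb k = w k - (1 / α) • G (1 / L) (w k)) :
    ∀ k : ℕ, y (k + 1) = (1 / Real.sqrt κ) • wbb k + (1 - 1 / Real.sqrt κ) • y k := by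

  have hL : 0 < L := lt_of_lt_of_le hα hαL
  have hκ0 : 0 < κ := by rw [hκ]; positivity
  set s := Real.sqrt κ with hsdef
  have hκs : κ = s ^ 2 := (Real.sq_sqrt hκ0.le).symm
  have hs1 : 1 < s := by
    nlinarith [Real.sqrt_nonneg κ, Real.sq_sqrt hκ0.le]
  have hs0 : s ≠ 0 := by linarith
  have hGw : ∀ k, G (1 / L) (w k) = L • (w k - x (k + 1)) := by
    intro k
    rw [hG, hxk]
    congr 1
    field_simp
  have hwbb' : ∀ k, wbb k = w k - κ • (w k - x (k + 1)) := by
    intro k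
    rw [hwbb, hGw, smul_smul]
    congr 2
    rw [hκ]; field_simp
  intro k
  cases k with
  | zero =>
    rw [hyk, hwbb' 0, hw0, hy0]
    match_scalars <;> rw [hκs] <;> field_simp <;> ring
  | succ k =>
    rw [hyk, hyk, hwbb' (k + 1), hwk, hθ]
    have hs2 : s + 1 ≠ 0 := by linarith
    match_scalars <;> rw [hκs] <;> field_simp <;> ring
end
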